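/- arXiv:2001.05758 — 2 statements merged into one kernel-verified Lean document; each statement's English description precedes it below -/
import Mathlib

section
/- For every simplicial set X there exist a non-singular simplicial set DX and a simplicial map η : X ⟶ DX that is surjective in every degree, such that every simplicial map from X to a non-singular simplicial set factors uniquely through η: for every non-singular simplicial set A and every simplicial map k : X ⟶ A there is a unique map k̄ : DX ⟶ A with k = k̄ ∘ η. -/
open CategoryTheory CategoryTheory.Limits Simplicial SSet

/-- The `i`-th vertex of an `n`-simplex `x`, i.e. `x · εᵢ`, where `εᵢ : [0] ⟶ [n]`
sends `0` to `i`. -/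
def SSet.vertex (X : SSet) {n : ℕ} (x : X _⦋n⦌) (i : Fin (n + 1)) : X _⦋0⦌ :=
  X.map (SimplexCategory.const ⦋0⦌ ⦋n⦌ i).op x

/-- A simplex is degenerate if it is obtained from a simplex of strictly lower degree
by the action of a (necessarily non-identity) epimorphism of the simplex category. -/
def SSet.IsDegenerate (X : SSet) {n : ℕ} (x : X _⦋n⦌) : Prop :=
  ∃ (m : ℕ) (_ : m < n) (σ : (⦋n⦌ : SimplexCategory) ⟶ ⦋m⦌) (y : X _⦋m⦌),
    Epi σ ∧ x = X.map σ.op y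

/-- A simplicial set is non-singular if the representing map of each of its
non-degenerate simplices is a monomorphism. -/
def SSet.NonSingular (X : SSet) : Prop :=
  ∀ (n : ℕ) (x : X _⦋n⦌), ¬ X.IsDegenerate x → Mono ((SSet.yonedaEquiv (X := X) (n := ⦋n⦌)).symm x)

/-- The relation `≈ₓ` on `Fin (n + 1)`: `i ≈ₓ k` iff there exists `j` with
`i ≤ k`, `k ≤ j` and `x·εᵢ = x·εⱼ`. -/
def SSet.approxRel (X : SSet) {n : ℕ} (x : X _⦋n⦌) (i k : Fin (n + 1)) : Prop :=
  ∃ j, i ≤ k ∧ k ≤ j ∧ X.vertex x i = X.vertex x j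

/-- The equivalence relation `Rₓ` generated by `≈ₓ`. -/
def SSet.vertexRel (X : SSet) {n : ℕ} (x : X _⦋n⦌) : Fin (n + 1) → Fin (n + 1) → Prop :=
  Relation.EqvGen (X.approxRel x)


/-! In a non-singular simplicial set, a simplex whose vertices `i < j` coincide factors through
the degeneracy `σ i`, because its non-degenerate root has injective vertices; hence it is fixed by
`σ i ∘ δ i`. So if two vertices of a simplex `x` of `X` are identified by every map to a
non-singular simplicial set, then so are `x` and the degenerate simplex `σ i (δ i x)`. The quotient
of `X` identifying the simplices that no such map separates thus has no non-degenerate simplex with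
repeated vertices, i.e. it is non-singular, and it has the universal property by construction. -/

namespace SSet

open SimplexCategory

universe u

variable {X : SSet.{u}}

lemma isDegenerate_iff_mem_degenerate {n : ℕ} (x : X _⦋n⦌) :
    X.IsDegenerate x ↔ x ∈ X.degenerate n := by
  rw [mem_degenerate_iff]
  constructor
  · rintro ⟨m, hm, f, y, hf, rfl⟩
    exact ⟨m, hm, f, hf, y, rfl⟩
  · rintro ⟨m, hm, f, hf, y, rfl⟩
    exact ⟨m, hm, f, y, hf, rfl⟩

lemma nonSingular_iff_nonsingular : X.NonSingular ↔ X.Nonsingular := by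
  constructor
  · intro h
    exact ⟨fun x => h _ _ (by rw [isDegenerate_iff_mem_degenerate]; exact x.2)⟩
  · intro _ n x hx
    rw [isDegenerate_iff_mem_degenerate] at hx
    exact Nonsingular.mono' x hx

lemma vertex_map {m : SimplexCategory} {n : ℕ} (f : m ⟶ ⦋n⦌) (x : X _⦋n⦌)
    (i : Fin (m.len + 1)) :
    X.map (SimplexCategory.const ⦋0⦌ m i).op (X.map f.op x) = X.vertex x (f.toOrderHom i) := by
  rw [← Functor.map_comp_apply, ← op_comp, SimplexCategory.const_comp]
  rfl

lemma vertex_naturality {Y : SSet.{u}} (k : X ⟶ Y) {n : ℕ} (x : X _⦋n⦌) (i : Fin (n + 1)) :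
    Y.vertex (k.app _ x) i = k.app _ (X.vertex x i) :=
  (NatTrans.naturality_apply k _ x).symm

lemma Nonsingular.vertex_injective [X.Nonsingular] {n : ℕ} {x : X _⦋n⦌}
    (hx : x ∈ X.nonDegenerate n) : Function.Injective (X.vertex x) := by
  intro i j hij
  have h := Nonsingular.injective_map x hx hij
  simpa using congrArg (fun f => f.toOrderHom 0) h

lemma mono_yonedaEquiv_symm_of_vertex_injective {n : ℕ} {x : X _⦋n⦌}
    (hx : Function.Injective (X.vertex x)) : Mono (yonedaEquiv.symm x) := by
  rw [NatTrans.mono_iff_mono_app]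
  intro m
  induction m using Opposite.rec with | _ m
  induction m using SimplexCategory.rec with | _ m
  rw [CategoryTheory.mono_iff_injective]
  intro g₁ g₂ hg
  apply stdSimplex.ext
  intro l
  apply hx
  have hg' : X.map (stdSimplex.objEquiv g₁).op x = X.map (stdSimplex.objEquiv g₂).op x := hg
  change X.vertex x ((stdSimplex.objEquiv g₁).toOrderHom l) =
    X.vertex x ((stdSimplex.objEquiv g₂).toOrderHom l)
  rw [← vertex_map, ← vertex_map, hg']

lemma Nonsingular.map_σ_δ_eq_self [X.Nonsingular] {m : ℕ} (z : X _⦋m + 1⦌) (i : Fin (m + 1))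
    {j : Fin (m + 2)} (hij : i.castSucc < j) (hv : X.vertex z i.castSucc = X.vertex z j) :
    X.map (σ i).op (X.map (δ i.castSucc).op z) = z := by
  obtain ⟨l, τ, _, y, rfl⟩ := X.exists_nonDegenerate z
  have hτ : τ.toOrderHom i.castSucc = τ.toOrderHom j := by
    apply vertex_injective y.2
    rwa [← vertex_map, ← vertex_map]
  have hτ' : τ.toOrderHom i.castSucc = τ.toOrderHom i.succ :=
    le_antisymm (τ.toOrderHom.monotone Fin.castSucc_lt_succ.le)
      (hτ ▸ τ.toOrderHom.monotone (Fin.castSucc_lt_iff_succ_le.mp hij))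
  obtain ⟨θ, rfl⟩ := eq_σ_comp_of_not_injective' τ i hτ'
  simp only [← Functor.map_comp_apply, ← op_comp, δ_comp_σ_self_assoc]

variable (X) in
def desingularizationSetoid (U : SimplexCategoryᵒᵖ) : Setoid (X.obj U) where
  r a b := ∀ (A : SSet.{u}) [A.Nonsingular] (k : X ⟶ A), k.app U a = k.app U b
  iseqv :=
    ⟨fun _ _ _ _ => rfl, fun h A _ k => (h A k).symm, fun h₁ h₂ A _ k => (h₁ A k).trans (h₂ A k)⟩

variable (X) in
def desingularization : SSet.{u} where
  obj U := Quotient (X.desingularizationSetoid U)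
  map f := TypeCat.ofHom (Quotient.map (X.map f) fun a b h A _ k => by
    rw [NatTrans.naturality_apply, NatTrans.naturality_apply, h A k])
  map_id U := by
    ext q
    obtain ⟨a, rfl⟩ := Quotient.exists_rep q
    exact congrArg Quotient.mk'' (Functor.map_id_apply X U a)
  map_comp f g := by
    ext q
    obtain ⟨a, rfl⟩ := Quotient.exists_rep q
    exact congrArg Quotient.mk'' (Functor.map_comp_apply X f g a)

variable (X) in
def toDesingularization : X ⟶ X.desingularization where
  app U := TypeCat.ofHom Quotient.mk''

lemma toDesingularization_app_surjective (U : SimplexCategoryᵒᵖ) :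
    Function.Surjective (X.toDesingularization.app U) :=
  Quotient.exists_rep

instance : Epi X.toDesingularization := by
  have (U : SimplexCategoryᵒᵖ) : Epi (X.toDesingularization.app U) :=
    (epi_iff_surjective _).mpr (toDesingularization_app_surjective U)
  exact NatTrans.epi_of_epi_app _

def desingularizationLift {A : SSet.{u}} [A.Nonsingular] (k : X ⟶ A) :
    X.desingularization ⟶ A where
  app U := TypeCat.ofHom (Quotient.lift (k.app U) fun _ _ h => h A k)
  naturality U V f := by
    ext q
    obtain ⟨a, rfl⟩ := Quotient.exists_rep q
    exact NatTrans.naturality_apply k f a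

@[simp]
lemma toDesingularization_desingularizationLift {A : SSet.{u}} [A.Nonsingular] (k : X ⟶ A) :
    X.toDesingularization ≫ desingularizationLift k = k :=
  rfl

lemma desingularization_mem_degenerate_of_vertex_eq {n : ℕ} (q : X.desingularization _⦋n⦌)
    {i j : Fin (n + 1)} (hij : i < j)
    (hv : X.desingularization.vertex q i = X.desingularization.vertex q j) :
    q ∈ X.desingularization.degenerate n := by
  obtain ⟨x, rfl⟩ := Quotient.exists_rep q
  obtain _ | m := n
  · exact absurd hij (by simp [Fin.fin_one_eq_zero i, Fin.fin_one_eq_zero j])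
  let i' := i.castPred (Fin.ne_last_of_lt hij)
  refine ⟨m, by omega, σ i', Quotient.mk _ (X.map (δ i'.castSucc).op x), Quotient.sound ?_⟩
  intro A _ k
  rw [NatTrans.naturality_apply, NatTrans.naturality_apply]
  refine Nonsingular.map_σ_δ_eq_self _ i' (j := j) (by simpa [i'] using hij) ?_
  rw [Fin.castSucc_castPred, vertex_naturality, vertex_naturality]
  exact Quotient.exact hv A k

instance : X.desingularization.Nonsingular where
  mono := by
    rintro n ⟨q, hq⟩
    apply mono_yonedaEquiv_symm_of_vertex_injective
    intro i j hv
    by_contra hij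
    rcases lt_or_gt_of_ne hij with hlt | hlt
    · exact hq (desingularization_mem_degenerate_of_vertex_eq q hlt hv)
    · exact hq (desingularization_mem_degenerate_of_vertex_eq q hlt hv.symm)

end SSet

/-- For every simplicial set `X` there is a degreewise surjective map `η : X ⟶ DX`
to a non-singular simplicial set through which every map from `X` to a non-singular
simplicial set factors uniquely. -/
theorem exists_desingularization (X : SSet) :
    ∃ (DX : SSet) (η : X ⟶ DX), DX.NonSingular ∧ (∀ n, Function.Surjective (η.app n)) ∧
      ∀ (A : SSet), A.NonSingular → ∀ k : X ⟶ A, ∃! kbar : DX ⟶ A, k = η ≫ kbar := by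
  refine ⟨X.desingularization, X.toDesingularization,
    nonSingular_iff_nonsingular.mpr inferInstance, toDesingularization_app_surjective,
    fun A hA k => ?_⟩
  have := nonSingular_iff_nonsingular.mp hA
  refine ⟨desingularizationLift k, rfl, fun kbar hkbar => ?_⟩
  rw [← cancel_epi X.toDesingularization, ← hkbar, toDesingularization_desingularizationLift]
end

section
/- Let f : X ⟶ A be a simplicial map whose target A is non-singular, let x be an n-simplex of X, and write f(x) = A.map σ.op z where z is a non-degenerate m-simplex of A and σ : [n] ⟶ [m] is an epimorphism of the simplex category (the Eilenberg–Zilber decomposition of f(x)). Then for all i, j ∈ Fin (n+1): if the equivalence relation Rₓ generated by ≈ₓ relates i and j, then σ i = σ j. -/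
/-!
A non-degenerate simplex `z` of a non-singular simplicial set has pairwise distinct vertices, so
two vertices of `x` that agree (hence agree in `f x = σ^* z`, whose `i`-th vertex is the
`σ i`-th vertex of `z`) have the same image under `σ`. Monotonicity of `σ` then makes `σ`
constant on every interval `[i, k]` witnessing `i ≈ₓ k`, and this passes to the generated
equivalence relation.
-/

open CategoryTheory CategoryTheory.Limits Simplicial SSet

namespace SSet

variable {X : SSet} {n : ℕ}

lemma vertex_app {Y : SSet} (f : X ⟶ Y) (x : X _⦋n⦌) (i : Fin (n + 1)) :
    Y.vertex (f.app _ x) i = f.app _ (X.vertex x i) :=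
  (NatTrans.naturality_apply f _ x).symm

lemma vertex_map_s8 {m : ℕ} (σ : (⦋n⦌ : SimplexCategory) ⟶ ⦋m⦌) (z : X _⦋m⦌) (i : Fin (n + 1)) :
    X.vertex (X.map σ.op z) i = X.vertex z (σ.toOrderHom i) := by
  rw [vertex, vertex, ← Functor.map_comp_apply, ← op_comp, SimplexCategory.const_comp]

lemma vertex_injective_of_mono (z : X _⦋n⦌) (hz : Mono (yonedaEquiv.symm z)) :
    Function.Injective (X.vertex z) := by
  intro i j hij
  rw [NatTrans.mono_iff_mono_app] at hz
  have hconst := (mono_iff_injective _).mp (hz (Opposite.op ⦋0⦌))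
    (a₁ := ULift.up (SimplexCategory.const ⦋0⦌ ⦋n⦌ i))
    (a₂ := ULift.up (SimplexCategory.const ⦋0⦌ ⦋n⦌ j)) hij
  simpa using congrArg (fun g => (ULift.down g).toOrderHom 0) hconst

lemma NonSingular.vertex_injective (hX : X.NonSingular) {z : X _⦋n⦌} (hz : ¬ X.IsDegenerate z) :
    Function.Injective (X.vertex z) :=
  vertex_injective_of_mono z (hX n z hz)

lemma approxRel.apply_eq {α : Type*} [PartialOrder α] {x : X _⦋n⦌} {g : Fin (n + 1) →o α}
    (hg : ∀ i j, X.vertex x i = X.vertex x j → g i = g j) {i k : Fin (n + 1)}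
    (hik : X.approxRel x i k) : g i = g k := by
  obtain ⟨j, hik, hkj, hij⟩ := hik
  exact le_antisymm (g.monotone hik) (hg i j hij ▸ g.monotone hkj)

lemma vertexRel.apply_eq {α : Type*} [PartialOrder α] {x : X _⦋n⦌} {g : Fin (n + 1) →o α}
    (hg : ∀ i j, X.vertex x i = X.vertex x j → g i = g j) {i j : Fin (n + 1)}
    (hij : X.vertexRel x i j) : g i = g j :=
  Relation.EqvGen.eqvGen_le (r' := (Setoid.ker g).r) (fun _ _ => approxRel.apply_eq hg) i j hij

end SSet

theorem ez_degeneracy_coarser_than_vertexRel_general {X A : SSet} (f : X ⟶ A) (hA : A.NonSingular)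
    {n m : ℕ} (x : X _⦋n⦌) (σ : (⦋n⦌ : SimplexCategory) ⟶ ⦋m⦌) (z : A _⦋m⦌)
    (hz : ¬ A.IsDegenerate z)
    (hfx : f.app (Opposite.op ⦋n⦌) x = A.map σ.op z)
    (i j : Fin (n + 1)) (hij : X.vertexRel x i j) :
    σ.toOrderHom i = σ.toOrderHom j := by
  refine vertexRel.apply_eq (fun i j hv => hA.vertex_injective hz ?_) hij
  rw [← vertex_map_s8, ← vertex_map_s8, ← hfx, vertex_app, vertex_app, hv]

/-- If `f : X ⟶ A` has non-singular target and `f(x) = A.map σ.op z` is the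
Eilenberg–Zilber decomposition of `f(x)`, then `σ` identifies any two indices
related by `Rₓ`. -/
theorem ez_degeneracy_coarser_than_vertexRel {X A : SSet} (f : X ⟶ A) (hA : A.NonSingular)
    {n m : ℕ} (x : X _⦋n⦌) (σ : (⦋n⦌ : SimplexCategory) ⟶ ⦋m⦌) (z : A _⦋m⦌)
    (hσ : Epi σ) (hz : ¬ A.IsDegenerate z)
    (hfx : f.app (Opposite.op ⦋n⦌) x = A.map σ.op z)
    (i j : Fin (n + 1)) (hij : X.vertexRel x i j) :
    σ.toOrderHom i = σ.toOrderHom j :=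
  ez_degeneracy_coarser_than_vertexRel_general f hA x σ z hz hfx i j hij
end
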